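/- Assume n ≥ 1 and define Q(A,a) := ¼ Σ_{j,k=1}^n ⟨ω(e_k,e_j), a⟩² − ½ Σ_{k=1}^n ‖ω(A,e_k)‖²_𝐂 for (A,a) ∈ H₀ × 𝐂. Then the largest constant k ∈ ℝ such that Q(A,a) ≥ k (‖A‖² + ‖a‖²) for all (A,a) ∈ H₀ × 𝐂 is k = −½ max{ Σ_{k=1}^n ‖ω(A,e_k)‖²_𝐂 : A ∈ H₀, ‖A‖ = 1 }. -/

import Mathlib

open scoped RealInnerProductSpace

/- The `a`-part of `Q` is a nonnegative quadratic form in `a` alone, while the `A`-part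
is `-½ f(A)` with `f(A) = Σ_k ‖ω(A,e_k)‖²` homogeneous of degree two, so `f(A) ≤ M ‖A‖²` with
`M = sup_{‖A‖=1} f(A)`. This gives `Q ≥ -½ M (‖A‖² + ‖a‖²)`, and testing on `(A, 0)` with `‖A‖ = 1`
shows that no larger constant works. -/

/-- The Ricci quadratic form
`Q(A,a) = ¼ Σ_{j,k} ⟨ω(e_k,e_j), a⟩² − ½ Σ_k ‖ω(A,e_k)‖²_𝐂` on `H₀ × 𝐂`. -/
noncomputable def ricciQ {H C : Type*} [NormedAddCommGroup H] [InnerProductSpace ℝ H]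
    [NormedAddCommGroup C] [InnerProductSpace ℝ C]
    (n : ℕ) (e : OrthonormalBasis (Fin n) ℝ H)
    (ω : H →ₗ[ℝ] H →ₗ[ℝ] C) (A : H) (a : C) : ℝ :=
  (1/4) * (∑ j : Fin n, ∑ k : Fin n, ⟪ω (e k) (e j), a⟫ ^ 2) -
    (1/2) * (∑ k : Fin n, ‖ω A (e k)‖ ^ 2)

section Homogeneous

variable {E : Type*} [NormedAddCommGroup E] [NormedSpace ℝ E]

theorem le_sSup_sphere_mul_norm_sq {f : E → ℝ} (hf : ∀ (c : ℝ) (x : E), f (c • x) = c ^ 2 * f x)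
    (hbdd : BddAbove {t : ℝ | ∃ x : E, ‖x‖ = 1 ∧ t = f x}) (x : E) :
    f x ≤ sSup {t : ℝ | ∃ x : E, ‖x‖ = 1 ∧ t = f x} * ‖x‖ ^ 2 := by
  rcases eq_or_ne x 0 with rfl | hx
  · have hf0 : f 0 = 0 := by simpa using hf 0 0
    simp [hf0]
  · have hx' : ‖x‖ ≠ 0 := norm_ne_zero_iff.2 hx
    have hunit : ‖(‖x‖⁻¹ • x)‖ = 1 := norm_smul_inv_norm hx
    have hdecomp : f x = ‖x‖ ^ 2 * f (‖x‖⁻¹ • x) := by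
      rw [← hf, smul_inv_smul₀ hx']
    rw [hdecomp, mul_comm]
    exact mul_le_mul_of_nonneg_right (le_csSup hbdd ⟨_, hunit, rfl⟩) (sq_nonneg _)

theorem bddAbove_sphere_of_continuous [FiniteDimensional ℝ E] {f : E → ℝ} (hf : Continuous f) :
    BddAbove {t : ℝ | ∃ x : E, ‖x‖ = 1 ∧ t = f x} := by
  refine ((isCompact_sphere (0 : E) 1).bddAbove_image hf.continuousOn).mono ?_
  rintro _ ⟨x, hx, rfl⟩
  exact ⟨x, mem_sphere_zero_iff_norm.2 hx, rfl⟩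

end Homogeneous

section SumNormSq

variable {ι H H' C : Type*} [Fintype ι] [NormedAddCommGroup H] [NormedSpace ℝ H]
  [AddCommGroup H'] [Module ℝ H'] [NormedAddCommGroup C] [NormedSpace ℝ C]

theorem sum_norm_sq_smul_left (ω : H →ₗ[ℝ] H' →ₗ[ℝ] C) (v : ι → H') (c : ℝ) (A : H) :
    ∑ k, ‖ω (c • A) (v k)‖ ^ 2 = c ^ 2 * ∑ k, ‖ω A (v k)‖ ^ 2 := by
  simp only [map_smul, LinearMap.smul_apply, norm_smul, Real.norm_eq_abs, mul_pow, sq_abs,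
    Finset.mul_sum]

theorem continuous_sum_norm_sq [FiniteDimensional ℝ H] (ω : H →ₗ[ℝ] H' →ₗ[ℝ] C) (v : ι → H') :
    Continuous fun A => ∑ k, ‖ω A (v k)‖ ^ 2 :=
  continuous_finsetSum _ fun k _ => ((ω.flip (v k)).continuous_of_finiteDimensional.norm).pow 2

end SumNormSq

section Ricci

variable {H C : Type*} [NormedAddCommGroup H] [InnerProductSpace ℝ H]
  [NormedAddCommGroup C] [InnerProductSpace ℝ C]

theorem ricciQ_zero_right (n : ℕ) (e : OrthonormalBasis (Fin n) ℝ H)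
    (ω : H →ₗ[ℝ] H →ₗ[ℝ] C) (A : H) :
    ricciQ n e ω A 0 = -(1/2) * ∑ k, ‖ω A (e k)‖ ^ 2 := by
  simp [ricciQ]

theorem neg_half_mul_le_ricciQ (n : ℕ) (e : OrthonormalBasis (Fin n) ℝ H) (ω : H →ₗ[ℝ] H →ₗ[ℝ] C)
    {M : ℝ} (hM : 0 ≤ M) (hbound : ∀ A, ∑ k, ‖ω A (e k)‖ ^ 2 ≤ M * ‖A‖ ^ 2) (A : H) (a : C) :
    -(1/2) * M * (‖A‖ ^ 2 + ‖a‖ ^ 2) ≤ ricciQ n e ω A a := by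
  have hcentral : 0 ≤ ∑ j : Fin n, ∑ k : Fin n, ⟪ω (e k) (e j), a⟫ ^ 2 :=
    Finset.sum_nonneg fun j _ => Finset.sum_nonneg fun k _ => sq_nonneg _
  have ha : 0 ≤ M * ‖a‖ ^ 2 := mul_nonneg hM (sq_nonneg _)
  unfold ricciQ
  linarith [hbound A]

end Ricci

theorem ricci_optimal_lower_bound_general
    {H C : Type*} [NormedAddCommGroup H] [InnerProductSpace ℝ H]
    [NormedAddCommGroup C] [InnerProductSpace ℝ C]
    (n : ℕ) (hn : 0 < n) (e : OrthonormalBasis (Fin n) ℝ H)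
    (ω : H →ₗ[ℝ] H →ₗ[ℝ] C) :
    IsGreatest
      {k : ℝ | ∀ (A : H) (a : C), k * (‖A‖ ^ 2 + ‖a‖ ^ 2) ≤ ricciQ n e ω A a}
      (-(1/2) * sSup {t : ℝ | ∃ A : H, ‖A‖ = 1 ∧ t = ∑ k : Fin n, ‖ω A (e k)‖ ^ 2}) := by
  have : FiniteDimensional ℝ H := Module.Finite.of_basis e.toBasis
  set S := {t : ℝ | ∃ A : H, ‖A‖ = 1 ∧ t = ∑ k : Fin n, ‖ω A (e k)‖ ^ 2}
  have hbdd : BddAbove S := bddAbove_sphere_of_continuous (continuous_sum_norm_sq ω e)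
  have hS_nonneg : 0 ≤ sSup S := Real.sSup_nonneg <| by
    rintro _ ⟨A, -, rfl⟩
    exact Finset.sum_nonneg fun k _ => sq_nonneg _
  refine ⟨neg_half_mul_le_ricciQ n e ω hS_nonneg
    (le_sSup_sphere_mul_norm_sq (sum_norm_sq_smul_left ω e) hbdd), fun k hk => ?_⟩
  have hS_le : sSup S ≤ -2 * k := by
    refine csSup_le ⟨_, e ⟨0, hn⟩, e.norm_eq_one _, rfl⟩ ?_
    rintro _ ⟨A, hA, rfl⟩
    have hA0 := hk A 0
    rw [ricciQ_zero_right, hA] at hA0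
    simp only [norm_zero] at hA0
    linarith
  linarith

/-- If `n ≥ 1`, the largest constant `k ∈ ℝ` with `Q(A,a) ≥ k (‖A‖² + ‖a‖²)` for all
`(A,a) ∈ H₀ × 𝐂` is `k = −½ max{Σ_k ‖ω(A,e_k)‖²_𝐂 : ‖A‖ = 1}`. -/
theorem ricci_optimal_lower_bound
    {H C : Type*} [NormedAddCommGroup H] [InnerProductSpace ℝ H]
    [NormedAddCommGroup C] [InnerProductSpace ℝ C] [FiniteDimensional ℝ C]
    (n : ℕ) (hn : 0 < n) (e : OrthonormalBasis (Fin n) ℝ H)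
    (ω : H →ₗ[ℝ] H →ₗ[ℝ] C)
    (hskew : ∀ A B : H, ω A B = - ω B A) :
    IsGreatest
      {k : ℝ | ∀ (A : H) (a : C), k * (‖A‖ ^ 2 + ‖a‖ ^ 2) ≤ ricciQ n e ω A a}
      (-(1/2) * sSup {t : ℝ | ∃ A : H, ‖A‖ = 1 ∧ t = ∑ k : Fin n, ‖ω A (e k)‖ ^ 2}) :=
  ricci_optimal_lower_bound_general n hn e ω
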